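/- Let K be a finite, pure, strongly connected simplicial complex of dimension n. Then −1 is an eigenvalue of the top down discriminant D_n^down (i.e. there is a nonzero g ∈ ℓ²(K_n) with D_n^down g = −g) if and only if K is coherently orientable. -/

import Mathlib

open scoped BigOperators

/-- The set of oriented `q`-simplices of a simplicial complex, together with the
orientation-reversal involution `bar` (writing `τ̄` for `bar τ`). -/
structure OrientedSet where
  K : Type
  bar : K → K
  bar_invol : ∀ τ, bar (bar τ) = τ
  bar_ne : ∀ τ, bar τ ≠ τ

/-- The data of an up graph (`mult = 2(q+1)`) or a down graph (`mult = 2`) on the set of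
oriented `q`-simplices: the sign function `η` (extended by `0` off the edge set, so that
`(τ₁, τ₂)` is an edge iff `eta τ₁ τ₂ ≠ 0`), the degree function (`deg_X`, resp. `deg_Y`),
and local finiteness; the degree of a vertex `τ` in the graph is `mult * deg τ`. -/
structure GroverStructure (O : OrientedSet) where
  eta : O.K → O.K → ℝ
  eta_symm : ∀ τ₁ τ₂, eta τ₁ τ₂ = eta τ₂ τ₁
  eta_vals : ∀ τ₁ τ₂, eta τ₁ τ₂ = 0 ∨ eta τ₁ τ₂ = 1 ∨ eta τ₁ τ₂ = -1
  eta_bar_left : ∀ τ₁ τ₂, eta (O.bar τ₁) τ₂ = - eta τ₁ τ₂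
  eta_self : ∀ τ, eta τ τ = 0
  eta_bar_self : ∀ τ, eta τ (O.bar τ) = 0
  deg : O.K → ℕ
  deg_pos : ∀ τ, 0 < deg τ
  deg_bar : ∀ τ, deg (O.bar τ) = deg τ
  mult : ℕ
  nbhdFinite : ∀ τ, {τ' | eta τ τ' ≠ 0}.Finite
  nbhd_card : ∀ τ, (nbhdFinite τ).toFinset.card = mult * deg τ

namespace GroverStructure

variable {O : OrientedSet} (Y : GroverStructure O)

/-- `(τ₁, τ₂)` is an oriented edge of the up/down graph. -/
def Edge (τ₁ τ₂ : O.K) : Prop := Y.eta τ₁ τ₂ ≠ 0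

/-- The normalization constant `(mult * deg τ)^(-1/2)`. -/
noncomputable def c (τ : O.K) : ℂ := ((Real.sqrt (Y.mult * Y.deg τ) : ℝ) : ℂ)⁻¹

/-- The operator `d : ℓ²(E) → ℓ²(K)`; elements of `ℓ²(E)` are represented as
functions on `K × K` (supported on the set of edges). -/
noncomputable def d (g : O.K × O.K → ℂ) : O.K → ℂ :=
  fun τ => Y.c τ * ∑ᶠ τ' ∈ {τ' | Y.eta τ τ' ≠ 0}, g (τ, τ')

/-- The adjoint `d* : ℓ²(K) → ℓ²(E)`. -/
noncomputable def dstar (f : O.K → ℂ) : O.K × O.K → ℂ :=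
  fun p => if Y.eta p.1 p.2 ≠ 0 then Y.c p.1 * f p.1 else 0

/-- The shift operator `(S g)(τ₁,τ₂) = η(τ₁,τ₂) • g(τ₂,τ₁)`. -/
noncomputable def shift (g : O.K × O.K → ℂ) : O.K × O.K → ℂ :=
  fun p => (Y.eta p.1 p.2 : ℂ) * g (p.2, p.1)

/-- The discriminant operator `D = d ∘ S ∘ d*`. -/
noncomputable def disc (f : O.K → ℂ) : O.K → ℂ := Y.d (Y.shift (Y.dstar f))

/-- The Grover walk `U = S (2 d* d − I)`. -/
noncomputable def walk (g : O.K × O.K → ℂ) : O.K × O.K → ℂ :=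
  Y.shift (fun p => 2 * Y.dstar (Y.d g) p - g p)

/-- Membership in `ℓ²(E)`: square summable and supported on the edge set. -/
def MemEdge (g : O.K × O.K → ℂ) : Prop :=
  Memℓp g 2 ∧ ∀ p : O.K × O.K, ¬ Y.Edge p.1 p.2 → g p = 0

end GroverStructure

/-- The orthogonal projection of `ℓ²(K_q)` onto the cochain space
`C^q(K,ℂ) = {f : f(τ̄) = -f(τ)}`. -/
noncomputable def projC (O : OrientedSet) (f : O.K → ℂ) : O.K → ℂ :=
  fun τ => (f τ - f (O.bar τ)) / 2

/-- The incidence signs `sgn(σ,τ)` between oriented simplices of two consecutive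
dimensions (`Olow` models `K_q`, `Ohigh` models `K_{q+1}`): `sgn σ τ ∈ {±1}` if the
underlying simplex `[τ]` is a face of `[σ]`, and `sgn σ τ = 0` otherwise. -/
structure SgnPair (Olow Ohigh : OrientedSet) where
  sgn : Ohigh.K → Olow.K → ℝ
  sgn_vals : ∀ σ τ, sgn σ τ = 0 ∨ sgn σ τ = 1 ∨ sgn σ τ = -1
  sgn_bar_left : ∀ σ τ, sgn (Ohigh.bar σ) τ = - sgn σ τ
  sgn_bar_right : ∀ σ τ, sgn σ (Olow.bar τ) = - sgn σ τ
  facesFinite : ∀ σ, {τ | sgn σ τ ≠ 0}.Finite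
  cofacesFinite : ∀ τ, {σ | sgn σ τ ≠ 0}.Finite

namespace SgnPair

variable {Olow Ohigh : OrientedSet} (P : SgnPair Olow Ohigh)

/-- The coboundary operator `(δ_q f)(σ) = (1/2) ∑_{τ ∈ K_q} sgn(σ,τ) f(τ)`. -/
noncomputable def delta (f : Olow.K → ℂ) : Ohigh.K → ℂ :=
  fun σ => (1 / 2 : ℂ) * ∑ᶠ τ, (P.sgn σ τ : ℂ) * f τ

/-- The adjoint coboundary `(δ_q* g)(τ) = (1/2) ∑_{σ ∈ K_{q+1}} sgn(σ,τ) g(σ)`. -/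
noncomputable def deltaStar (g : Ohigh.K → ℂ) : Olow.K → ℂ :=
  fun τ => (1 / 2 : ℂ) * ∑ᶠ σ, (P.sgn σ τ : ℂ) * g σ

end SgnPair

/-- The Grover structure `X` is the up graph structure at level `q` induced by the
incidence signs into level `q+1`: two oriented `q`-simplices span an edge iff their
underlying simplices are distinct up neighbors, `η^up(τ₁,τ₂) = sgn(σ,τ₁)·sgn(σ,τ₂)`
for (either orientation of) the common `(q+1)`-simplex `σ`, and `deg_X τ` is the number
of `(q+1)`-simplices containing `[τ]` as a face (each such simplex having exactly two
orientations). -/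
def GroverStructure.IsUpOf {O Oup : OrientedSet} (X : GroverStructure O)
    (P : SgnPair O Oup) : Prop :=
  (∀ τ₁ τ₂ : O.K, X.eta τ₁ τ₂ ≠ 0 ↔
      τ₁ ≠ τ₂ ∧ τ₁ ≠ O.bar τ₂ ∧ ∃ σ, P.sgn σ τ₁ ≠ 0 ∧ P.sgn σ τ₂ ≠ 0) ∧
  (∀ τ₁ τ₂ σ, τ₁ ≠ τ₂ → τ₁ ≠ O.bar τ₂ → P.sgn σ τ₁ ≠ 0 → P.sgn σ τ₂ ≠ 0 →
      X.eta τ₁ τ₂ = P.sgn σ τ₁ * P.sgn σ τ₂) ∧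
  (∀ τ, (P.cofacesFinite τ).toFinset.card = 2 * X.deg τ)

/-- The Grover structure `Y` is the down graph structure at level `q+1` induced by the
incidence signs from level `q`: two oriented `(q+1)`-simplices span an edge iff their
underlying simplices are distinct down neighbors, and
`η^down(σ₁,σ₂) = sgn(σ₁,μ)·sgn(σ₂,μ)` for (either orientation of) a common face `μ`. -/
def GroverStructure.IsDownOf {Odn O : OrientedSet} (Y : GroverStructure O)
    (P : SgnPair Odn O) : Prop :=
  (∀ σ₁ σ₂ : O.K, Y.eta σ₁ σ₂ ≠ 0 ↔
      σ₁ ≠ σ₂ ∧ σ₁ ≠ O.bar σ₂ ∧ ∃ μ, P.sgn σ₁ μ ≠ 0 ∧ P.sgn σ₂ μ ≠ 0) ∧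
  (∀ σ₁ σ₂ μ, σ₁ ≠ σ₂ → σ₁ ≠ O.bar σ₂ → P.sgn σ₁ μ ≠ 0 → P.sgn σ₂ μ ≠ 0 →
      Y.eta σ₁ σ₂ = P.sgn σ₁ μ * P.sgn σ₂ μ)

/-- `A ⊆ K_n` is an orientation: it contains exactly one of `σ`, `σ̄` for each `σ`. -/
def OrientedSet.IsOrientation (O : OrientedSet) (A : Set O.K) : Prop :=
  ∀ τ, τ ∈ A ↔ O.bar τ ∉ A

/-- `K` is coherently orientable: there is an orientation `K_n^o` such that
`sgn(σ₁,τ)·sgn(σ₂,τ) = −1` for any two down-neighboring `σ₁, σ₂ ∈ K_n^o`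
with common `(n−1)`-face `τ`. -/
def SgnPair.CoherentlyOrientable {Odn O : OrientedSet} (P : SgnPair Odn O) : Prop :=
  ∃ A : Set O.K, O.IsOrientation A ∧
    ∀ σ₁ ∈ A, ∀ σ₂ ∈ A, σ₁ ≠ σ₂ → σ₁ ≠ O.bar σ₂ →
      ∀ μ, P.sgn σ₁ μ ≠ 0 → P.sgn σ₂ μ ≠ 0 → P.sgn σ₁ μ * P.sgn σ₂ μ = -1

/-- `K` is totally non-coherently orientable: there is an orientation `K_n^o` such that
`sgn(σ₁,τ)·sgn(σ₂,τ) = 1` for any two down-neighboring `σ₁, σ₂ ∈ K_n^o`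
with common `(n−1)`-face `τ`. -/
def SgnPair.TotallyNonCoherentlyOrientable {Odn O : OrientedSet} (P : SgnPair Odn O) : Prop :=
  ∃ A : Set O.K, O.IsOrientation A ∧
    ∀ σ₁ ∈ A, ∀ σ₂ ∈ A, σ₁ ≠ σ₂ → σ₁ ≠ O.bar σ₂ →
      ∀ μ, P.sgn σ₁ μ ≠ 0 → P.sgn σ₂ μ ≠ 0 → P.sgn σ₁ μ * P.sgn σ₂ μ = 1

/-!
Put `h = c · g` and `N τ = Σ_τ' η(τ,τ')² = 2 deg_Y τ`. The equation `D g = -g` says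
`Σ_τ' η(τ,τ') h τ' = -N τ · h τ`, i.e. `h` lies in the kernel of the signless Laplacian
`diag N + η` of the signed down graph. Its quadratic form is `½ Σ η² |η(τ,τ') h τ' + h τ|²`, so
the kernel consists of the `h` with `η(τ,τ') h τ' = -h τ` along every edge. By strong
connectivity such an `h ≠ 0` takes only the values `±h τ₀`, and `{τ | h τ = h τ₀}` is an
orientation on which every edge has `η = -1`, i.e. a coherent one. Conversely, the `±1`-valued
sign function of a coherent orientation lies in the kernel.
-/

namespace GroverStructure

variable {O : OrientedSet} (Y : GroverStructure O)

/-- Switching by `h` makes every edge of the signed graph `(K, η)` negative, as in an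
antibalanced signed graph. -/
def IsAntibalancedBy (h : O.K → ℂ) : Prop :=
  ∀ τ τ', Y.eta τ τ' ≠ 0 → (Y.eta τ τ' : ℂ) * h τ' = -h τ

def IsCoherentOrientation (A : Set O.K) : Prop :=
  O.IsOrientation A ∧ ∀ σ₁ ∈ A, ∀ σ₂ ∈ A, Y.eta σ₁ σ₂ ≠ 0 → Y.eta σ₁ σ₂ = -1

lemma eta_bar_right (τ₁ τ₂ : O.K) : Y.eta τ₁ (O.bar τ₂) = -Y.eta τ₁ τ₂ := by
  rw [Y.eta_symm, Y.eta_bar_left, Y.eta_symm]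

lemma eta_sq_of_ne_zero {τ₁ τ₂ : O.K} (h : Y.eta τ₁ τ₂ ≠ 0) : Y.eta τ₁ τ₂ ^ 2 = 1 := by
  rcases Y.eta_vals τ₁ τ₂ with h1 | h1 | h1 <;> simp_all

lemma eta_pow_three (τ₁ τ₂ : O.K) : Y.eta τ₁ τ₂ ^ 3 = Y.eta τ₁ τ₂ := by
  rcases Y.eta_vals τ₁ τ₂ with h1 | h1 | h1 <;> norm_num [h1]

lemma exists_eta_ne_zero (hm : 0 < Y.mult) (τ : O.K) : ∃ τ', Y.eta τ τ' ≠ 0 := by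
  have hcard : 0 < (Y.nbhdFinite τ).toFinset.card := by
    rw [Y.nbhd_card]
    exact Nat.mul_pos hm (Y.deg_pos τ)
  obtain ⟨τ', hτ'⟩ := Finset.card_pos.mp hcard
  exact ⟨τ', (Y.nbhdFinite τ).mem_toFinset.mp hτ'⟩

lemma sum_eta_sq [Fintype O.K] (τ : O.K) : ∑ τ', Y.eta τ τ' ^ 2 = Y.mult * Y.deg τ := by
  classical
  have hind : ∀ τ', Y.eta τ τ' ^ 2 = if τ' ∈ (Y.nbhdFinite τ).toFinset then 1 else 0 := by
    intro τ'
    split_ifs with he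
    · exact Y.eta_sq_of_ne_zero ((Y.nbhdFinite τ).mem_toFinset.mp he)
    · simp_all
  rw [Finset.sum_congr rfl fun τ' _ => hind τ', Finset.sum_boole, Finset.filter_mem_eq_inter,
    Finset.univ_inter, Y.nbhd_card]
  push_cast
  ring

lemma eta_sq_mul_normSq_eta_mul_add (h : O.K → ℂ) (τ τ' : O.K) :
    Y.eta τ τ' ^ 2 * Complex.normSq ((Y.eta τ τ' : ℂ) * h τ' + h τ)
      = Y.eta τ τ' ^ 2 * Complex.normSq (h τ') + Y.eta τ τ' ^ 2 * Complex.normSq (h τ)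
        + 2 * ((Y.eta τ τ' : ℂ) * h τ' * starRingEnd ℂ (h τ)).re := by
  have h4 : Y.eta τ τ' ^ 4 = Y.eta τ τ' ^ 2 := by
    rw [show 4 = 3 + 1 from rfl, pow_succ, Y.eta_pow_three, ← sq]
  rw [Complex.normSq_add, Complex.normSq_mul, Complex.normSq_ofReal, mul_assoc _ (h τ'),
    Complex.re_ofReal_mul]
  linear_combination (Complex.normSq (h τ')) * h4
    + 2 * (h τ' * starRingEnd ℂ (h τ)).re * Y.eta_pow_three τ τ'

/-- The quadratic form of the signless Laplacian `diag (Σ η²) + η` as a sum over edges. -/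
lemma sum_sum_eta_sq_mul_normSq [Fintype O.K] (h : O.K → ℂ) :
    ∑ τ, ∑ τ', Y.eta τ τ' ^ 2 * Complex.normSq ((Y.eta τ τ' : ℂ) * h τ' + h τ)
      = 2 * ∑ τ, ((∑ τ', (Y.eta τ τ' : ℂ) * h τ'
          + ((∑ τ', Y.eta τ τ' ^ 2 : ℝ) : ℂ) * h τ) * starRingEnd ℂ (h τ)).re := by
  have hswap : ∑ τ, ∑ τ', Y.eta τ τ' ^ 2 * Complex.normSq (h τ')
      = ∑ τ, ∑ τ', Y.eta τ τ' ^ 2 * Complex.normSq (h τ) := by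
    rw [Finset.sum_comm]
    simp only [Y.eta_symm]
  simp only [Y.eta_sq_mul_normSq_eta_mul_add, Finset.sum_add_distrib, hswap, add_mul,
    Complex.add_re, Finset.sum_mul, Complex.re_sum, mul_assoc, Complex.mul_conj,
    ← Complex.ofReal_mul, Complex.ofReal_re, ← Finset.mul_sum]
  ring

lemma isAntibalancedBy_iff [Fintype O.K] (h : O.K → ℂ) :
    Y.IsAntibalancedBy h ↔
      ∀ τ, ∑ τ', (Y.eta τ τ' : ℂ) * h τ' = -((∑ τ', Y.eta τ τ' ^ 2 : ℝ) : ℂ) * h τ := by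
  constructor
  · intro hh τ
    have hterm : ∀ τ', (Y.eta τ τ' : ℂ) * h τ' = -((Y.eta τ τ' ^ 2 : ℝ) : ℂ) * h τ := by
      intro τ'
      by_cases he : Y.eta τ τ' = 0
      · simp [he]
      · rw [hh τ τ' he, Y.eta_sq_of_ne_zero he]
        simp
    simp only [hterm, Complex.ofReal_sum, Finset.sum_mul, Finset.sum_neg_distrib, neg_mul]
  · intro hsum τ τ' he
    set q : O.K → O.K → ℝ := fun τ τ' =>
      Y.eta τ τ' ^ 2 * Complex.normSq ((Y.eta τ τ' : ℂ) * h τ' + h τ) with hq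
    have hq_sum : ∑ τ, ∑ τ', q τ τ' = 0 := by simp [hq, Y.sum_sum_eta_sq_mul_normSq, hsum]
    have hq_nonneg : ∀ τ τ', 0 ≤ q τ τ' :=
      fun τ τ' => mul_nonneg (sq_nonneg _) (Complex.normSq_nonneg _)
    have hrow := (Fintype.sum_eq_zero_iff_of_nonneg fun τ => Finset.sum_nonneg
      fun τ' _ => hq_nonneg τ τ').mp hq_sum
    have hq_zero := congrFun ((Fintype.sum_eq_zero_iff_of_nonneg (hq_nonneg τ)).mp
      (congrFun hrow τ)) τ'
    simp only [hq, Pi.zero_apply, mul_eq_zero, pow_eq_zero_iff two_ne_zero, he, false_or,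
      Complex.normSq_eq_zero] at hq_zero
    exact eq_neg_of_add_eq_zero_left hq_zero

lemma disc_apply [Fintype O.K] (g : O.K → ℂ) (τ : O.K) :
    Y.disc g τ = Y.c τ * ∑ τ', (Y.eta τ τ' : ℂ) * (Y.c τ' * g τ') := by
  have hterm : ∀ τ', Y.shift (Y.dstar g) (τ, τ') = (Y.eta τ τ' : ℂ) * (Y.c τ' * g τ') := by
    intro τ'
    by_cases he : Y.eta τ τ' = 0
    · simp [shift, he]
    · simp [shift, dstar, Y.eta_symm τ' τ, he]
  simp only [disc, d, hterm]
  congr 1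
  refine finsum_mem_eq_sum_of_inter_support_eq _ ?_
  rw [Finset.coe_univ, Set.univ_inter, Set.inter_eq_right]
  intro τ' hτ' he
  simp [he] at hτ'

lemma c_ne_zero (hm : 0 < Y.mult) (τ : O.K) : Y.c τ ≠ 0 := by
  simp [c, hm.ne', (Y.deg_pos τ).ne']

lemma c_mul_c_mul_sum_eta_sq [Fintype O.K] (hm : 0 < Y.mult) (τ : O.K) :
    Y.c τ * Y.c τ * ((∑ τ', Y.eta τ τ' ^ 2 : ℝ) : ℂ) = 1 := by
  have hpos : (0 : ℝ) < Y.mult * Y.deg τ := by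
    have := Y.deg_pos τ
    positivity
  rw [Y.sum_eta_sq, c, ← mul_inv, ← Complex.ofReal_mul, Real.mul_self_sqrt hpos.le,
    inv_mul_cancel₀ (by exact_mod_cast hpos.ne')]

lemma disc_eq_neg_iff [Fintype O.K] (hm : 0 < Y.mult) (g : O.K → ℂ) :
    (Y.disc g = fun τ => -g τ) ↔ Y.IsAntibalancedBy (fun τ => Y.c τ * g τ) := by
  rw [isAntibalancedBy_iff, funext_iff]
  refine forall_congr' fun τ => ?_
  rw [disc_apply, ← mul_right_inj' (Y.c_ne_zero hm τ)]
  have hc := Y.c_mul_c_mul_sum_eta_sq hm τ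
  set S := ∑ τ', (Y.eta τ τ' : ℂ) * (Y.c τ' * g τ')
  set N : ℂ := ((∑ τ', Y.eta τ τ' ^ 2 : ℝ) : ℂ)
  constructor <;> intro h
  · linear_combination N * h - S * hc
  · linear_combination Y.c τ ^ 2 * h - Y.c τ * g τ * hc

lemma exists_disc_eq_neg_iff [Fintype O.K] (hm : 0 < Y.mult) :
    (∃ g : O.K → ℂ, g ≠ 0 ∧ Y.disc g = fun τ => -g τ) ↔
      ∃ h : O.K → ℂ, h ≠ 0 ∧ Y.IsAntibalancedBy h := by
  constructor
  · rintro ⟨g, hg, hdisc⟩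
    refine ⟨fun τ => Y.c τ * g τ, ?_, (Y.disc_eq_neg_iff hm g).mp hdisc⟩
    contrapose! hg
    funext τ
    simpa [Y.c_ne_zero hm τ] using congrFun hg τ
  · rintro ⟨h, hh, hanti⟩
    refine ⟨fun τ => (Y.c τ)⁻¹ * h τ, ?_, (Y.disc_eq_neg_iff hm _).mpr ?_⟩
    · contrapose! hh
      funext τ
      simpa [Y.c_ne_zero hm τ] using congrFun hh τ
    · simpa [Y.c_ne_zero hm] using hanti

namespace IsAntibalancedBy

variable {Y} {h : O.K → ℂ}

lemma apply_eq_neg_eta_mul (hh : Y.IsAntibalancedBy h) {τ τ' : O.K} (he : Y.eta τ τ' ≠ 0) :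
    h τ' = -(Y.eta τ τ' : ℂ) * h τ := by
  have hsq : (Y.eta τ τ' : ℂ) ^ 2 = 1 := by exact_mod_cast Y.eta_sq_of_ne_zero he
  linear_combination (Y.eta τ τ' : ℂ) * hh τ τ' he - h τ' * hsq

lemma apply_bar (hh : Y.IsAntibalancedBy h) (hm : 0 < Y.mult) (τ : O.K) :
    h (O.bar τ) = -h τ := by
  obtain ⟨τ', he⟩ := Y.exists_eta_ne_zero hm τ
  have hbar := hh (O.bar τ) τ' (by rwa [Y.eta_bar_left, neg_ne_zero])
  rw [Y.eta_bar_left, Complex.ofReal_neg] at hbar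
  linear_combination hh τ τ' he + hbar

lemma apply_eq_or_eq_neg (hh : Y.IsAntibalancedBy h) {τ₀ τ : O.K}
    (hr : Relation.ReflTransGen (fun a b => Y.eta a b ≠ 0) τ₀ τ) :
    h τ = h τ₀ ∨ h τ = -h τ₀ := by
  induction hr with
  | refl => exact Or.inl rfl
  | tail _ he ih =>
    rw [hh.apply_eq_neg_eta_mul he]
    rcases Y.eta_vals _ _ with h0 | h1 | h1
    · exact absurd h0 he
    · rcases ih with ih | ih <;> simp [h1, ih]
    · rcases ih with ih | ih <;> simp [h1, ih]

lemma isCoherentOrientation (hh : Y.IsAntibalancedBy h) (hm : 0 < Y.mult)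
    (hconn : ∀ σ σ' : O.K, σ' ≠ σ → σ' ≠ O.bar σ →
      Relation.ReflTransGen (fun a b => Y.eta a b ≠ 0) σ σ')
    {τ₀ : O.K} (h₀ : h τ₀ ≠ 0) :
    Y.IsCoherentOrientation {τ | h τ = h τ₀} := by
  have hpm : ∀ τ, h τ = h τ₀ ∨ h τ = -h τ₀ := by
    intro τ
    by_cases hτ : τ = τ₀
    · exact Or.inl (by rw [hτ])
    by_cases hτ' : τ = O.bar τ₀
    · exact Or.inr (by rw [hτ', hh.apply_bar hm])
    exact hh.apply_eq_or_eq_neg (hconn τ₀ τ hτ hτ')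
  have hneg : -h τ₀ ≠ h τ₀ := fun h' => h₀ (by linear_combination -h' / 2)
  refine ⟨fun τ => ?_, fun σ₁ h₁ σ₂ h₂ he => ?_⟩
  · simp only [Set.mem_ofPred_eq, hh.apply_bar hm]
    rcases hpm τ with h' | h' <;> simp [h', hneg]
  · have hσ := hh.apply_eq_neg_eta_mul he
    rw [Set.mem_ofPred_eq.mp h₁, Set.mem_ofPred_eq.mp h₂] at hσ
    have hη : ((Y.eta σ₁ σ₂ : ℂ) + 1) * h τ₀ = 0 := by linear_combination hσ
    exact_mod_cast eq_neg_of_add_eq_zero_left ((mul_eq_zero.mp hη).resolve_right h₀)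

end IsAntibalancedBy

lemma IsCoherentOrientation.isAntibalancedBy_sign {A : Set O.K} [DecidablePred (· ∈ A)]
    (hA : Y.IsCoherentOrientation A) :
    Y.IsAntibalancedBy (fun τ => if τ ∈ A then 1 else -1) := by
  obtain ⟨hOr, hneg⟩ := hA
  intro τ τ' he
  by_cases hτ : τ ∈ A <;> by_cases hτ' : τ' ∈ A
  · simp [hτ, hτ', hneg τ hτ τ' hτ' he]
  · have := hneg τ hτ (O.bar τ') ((hOr τ').not_left.mp hτ')
      (by rwa [Y.eta_bar_right, neg_ne_zero])
    rw [Y.eta_bar_right, neg_eq_iff_eq_neg, neg_neg] at this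
    simp [hτ, hτ', this]
  · have := hneg (O.bar τ) ((hOr τ).not_left.mp hτ) τ' hτ'
      (by rwa [Y.eta_bar_left, neg_ne_zero])
    rw [Y.eta_bar_left, neg_eq_iff_eq_neg, neg_neg] at this
    simp [hτ, hτ', this]
  · have := hneg (O.bar τ) ((hOr τ).not_left.mp hτ) (O.bar τ') ((hOr τ').not_left.mp hτ')
      (by rwa [Y.eta_bar_left, Y.eta_bar_right, neg_neg])
    rw [Y.eta_bar_left, Y.eta_bar_right, neg_neg] at this
    simp [hτ, hτ', this]

lemma exists_isAntibalancedBy_ne_zero_iff (hm : 0 < Y.mult) (hne : Nonempty O.K)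
    (hconn : ∀ σ σ' : O.K, σ' ≠ σ → σ' ≠ O.bar σ →
      Relation.ReflTransGen (fun a b => Y.eta a b ≠ 0) σ σ') :
    (∃ h : O.K → ℂ, h ≠ 0 ∧ Y.IsAntibalancedBy h) ↔ ∃ A, Y.IsCoherentOrientation A := by
  classical
  constructor
  · rintro ⟨h, hh₀, hh⟩
    obtain ⟨τ₀, h₀⟩ := Function.ne_iff.mp hh₀
    exact ⟨_, hh.isCoherentOrientation hm hconn h₀⟩
  · rintro ⟨A, hA⟩
    refine ⟨_, fun h => ?_, hA.isAntibalancedBy_sign⟩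
    have := congrFun h hne.some
    split_ifs at this <;> norm_num at this

lemma IsDownOf.coherentlyOrientable_iff {Odn : OrientedSet} {P : SgnPair Odn O}
    (hY : Y.IsDownOf P) : P.CoherentlyOrientable ↔ ∃ A, Y.IsCoherentOrientation A := by
  refine exists_congr fun A => and_congr_right fun _ => ⟨fun hA => ?_, fun hA => ?_⟩
  · intro σ₁ h₁ σ₂ h₂ he
    obtain ⟨hne, hnbar, μ, hμ₁, hμ₂⟩ := (hY.1 σ₁ σ₂).mp he
    rw [hY.2 σ₁ σ₂ μ hne hnbar hμ₁ hμ₂]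
    exact hA σ₁ h₁ σ₂ h₂ hne hnbar μ hμ₁ hμ₂
  · intro σ₁ h₁ σ₂ h₂ hne hnbar μ hμ₁ hμ₂
    rw [← hY.2 σ₁ σ₂ μ hne hnbar hμ₁ hμ₂]
    exact hA σ₁ h₁ σ₂ h₂ ((hY.1 σ₁ σ₂).mpr ⟨hne, hnbar, μ, hμ₁, hμ₂⟩)

end GroverStructure

theorem eigenvalue_neg_one_iff_coherently_orientable_general
    (Odn O : OrientedSet) [Finite O.K] (hne : Nonempty O.K)
    (P : SgnPair Odn O)
    (Y : GroverStructure O) (hYm : Y.mult = 2) (hY : Y.IsDownOf P)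
    (hconn : ∀ σ σ' : O.K, σ' ≠ σ → σ' ≠ O.bar σ →
      Relation.ReflTransGen (fun a b => Y.eta a b ≠ 0) σ σ') :
    (∃ g : O.K → ℂ, g ≠ 0 ∧ Y.disc g = fun τ => - g τ) ↔ P.CoherentlyOrientable := by
  have hm : 0 < Y.mult := hYm ▸ two_pos
  have := Fintype.ofFinite O.K
  rw [Y.exists_disc_eq_neg_iff hm, Y.exists_isAntibalancedBy_ne_zero_iff hm hne hconn,
    hY.coherentlyOrientable_iff]

/-- For a finite, pure, strongly connected `n`-dimensional complex,
`−1` is an eigenvalue of the top down discriminant `D_n^down` if and only if `K` is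
coherently orientable. -/
theorem eigenvalue_neg_one_iff_coherently_orientable
    (Odn O : OrientedSet) [Finite Odn.K] [Finite O.K] (hne : Nonempty O.K)
    (P : SgnPair Odn O)
    (Y : GroverStructure O) (hYm : Y.mult = 2) (hY : Y.IsDownOf P)
    (hconn : ∀ σ σ' : O.K, σ' ≠ σ → σ' ≠ O.bar σ →
      Relation.ReflTransGen (fun a b => Y.eta a b ≠ 0) σ σ') :
    (∃ g : O.K → ℂ, g ≠ 0 ∧ Y.disc g = fun τ => - g τ) ↔ P.CoherentlyOrientable :=
  eigenvalue_neg_one_iff_coherently_orientable_general Odn O hne P Y hYm hY hconn
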